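/- Let n = 8k+7 and P ⊂ ℝ³ be in general position, and let (H₁, H₂, H₃) be an eight-partition of P such that each pair (H_i, H_j) four-partitions P, H₁ contains exactly one point, and H₂, H₃ contain exactly three points each, with every open octant containing exactly k points. Write R and B for the 4k+3 points strictly below and above H₁ respectively. Then H₂ and H₃ each bisect both R and B (at most ⌊(4k+3)/2⌋ = 2k+1 points of each color strictly on each side), the pair (H₂, H₃) four-partitions both R and B, and each of H₂ and H₃ contains at least one point of R and at least one point of B. -/
import Mathlib


open MeasureTheory
open scoped RealInnerProductSpace

noncomputable section

abbrev E3 := EuclideanSpace ℝ (Fin 3)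

def halfSpace (v : E3) (a : ℝ) (s : Bool) : Set E3 :=
  if s then {x | a < ⟪v, x⟫} else {x | ⟪v, x⟫ < a}

def orthant {k : ℕ} (v : Fin k → E3) (a : Fin k → ℝ) (α : Fin k → Bool) : Set E3 :=
  ⋂ i, halfSpace (v i) (a i) (α i)

lemma plane_nonempty (S : Set E3) (hS : S.Finite) (w : E3) (b : ℝ) (k : ℕ)
    (hcard : S.ncard = 4 * k + 3)
    (hf : (S ∩ halfSpace w b false).ncard ≤ 2 * k + 1)
    (ht : (S ∩ halfSpace w b true).ncard ≤ 2 * k + 1) :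
    (S ∩ {x | ⟪w, x⟫ = b}).Nonempty := by
  rw [Set.nonempty_iff_ne_empty]
  intro hemp
  have hsub : S ⊆ (S ∩ halfSpace w b false) ∪ (S ∩ halfSpace w b true) := by
    intro x hx
    rcases lt_trichotomy ⟪w, x⟫ b with h | h | h
    · exact Or.inl ⟨hx, by simpa [halfSpace] using h⟩
    · exact absurd (Set.mem_empty_iff_false x |>.mp (hemp ▸ ⟨hx, h⟩)) (fun h => h)
    · exact Or.inr ⟨hx, by simpa [halfSpace] using h⟩
  have hle : S.ncard ≤ (S ∩ halfSpace w b false).ncard + (S ∩ halfSpace w b true).ncard :=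
    le_trans (Set.ncard_le_ncard hsub ((hS.inter_of_left _).union (hS.inter_of_left _)))
      (Set.ncard_union_le _ _)
  omega

/-- Let `P` be `8k+7` points in general position (no four coplanar), and `(H₁, H₂, H₃)` an
eight-partition of `P` with: every pair `(Hᵢ, Hⱼ)` four-partitioning `P` (at most `2k+1`
points per open quadrant), `H₁` containing exactly one point, `H₂, H₃` exactly three each,
every open octant containing exactly `k` points, and `R`, `B` (the points strictly below,
resp. above, `H₁`) of size `4k+3` each.  Then `H₂` and `H₃` each bisect both `R` and `B`,
the pair `(H₂, H₃)` four-partitions both `R` and `B` (at most `k` points of each color per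
open quadrant), and each of `H₂`, `H₃` contains at least one point of `R` and of `B`. -/
theorem stmt18 (k : ℕ) (P : Finset E3) (hP : P.card = 8 * k + 7)
    (hgp : ∀ s : Finset E3, s ⊆ P → s.card = 4 → ¬ Coplanar ℝ (s : Set E3))
    (v : Fin 3 → E3) (a : Fin 3 → ℝ) (hv : ∀ i, v i ≠ 0)
    (hoct : ∀ α : Fin 3 → Bool, ((P : Set E3) ∩ orthant v a α).ncard = k)
    (hpair : ∀ i j : Fin 3, i ≠ j → ∀ s t : Bool,
      ((P : Set E3) ∩ halfSpace (v i) (a i) s ∩ halfSpace (v j) (a j) t).ncard ≤ 2 * k + 1)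
    (h1 : ((P : Set E3) ∩ {x | ⟪v 0, x⟫ = a 0}).ncard = 1)
    (h2 : ((P : Set E3) ∩ {x | ⟪v 1, x⟫ = a 1}).ncard = 3)
    (h3 : ((P : Set E3) ∩ {x | ⟪v 2, x⟫ = a 2}).ncard = 3)
    (hRcard : ((P : Set E3) ∩ halfSpace (v 0) (a 0) false).ncard = 4 * k + 3)
    (hBcard : ((P : Set E3) ∩ halfSpace (v 0) (a 0) true).ncard = 4 * k + 3) :
    let R : Set E3 := (P : Set E3) ∩ halfSpace (v 0) (a 0) false
    let B : Set E3 := (P : Set E3) ∩ halfSpace (v 0) (a 0) true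
    (∀ s : Bool, (R ∩ halfSpace (v 1) (a 1) s).ncard ≤ 2 * k + 1) ∧
    (∀ s : Bool, (B ∩ halfSpace (v 1) (a 1) s).ncard ≤ 2 * k + 1) ∧
    (∀ s : Bool, (R ∩ halfSpace (v 2) (a 2) s).ncard ≤ 2 * k + 1) ∧
    (∀ s : Bool, (B ∩ halfSpace (v 2) (a 2) s).ncard ≤ 2 * k + 1) ∧
    (∀ s t : Bool,
      (R ∩ halfSpace (v 1) (a 1) s ∩ halfSpace (v 2) (a 2) t).ncard ≤ k) ∧
    (∀ s t : Bool,
      (B ∩ halfSpace (v 1) (a 1) s ∩ halfSpace (v 2) (a 2) t).ncard ≤ k) ∧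
    (R ∩ {x | ⟪v 1, x⟫ = a 1}).Nonempty ∧ (B ∩ {x | ⟪v 1, x⟫ = a 1}).Nonempty ∧
    (R ∩ {x | ⟪v 2, x⟫ = a 2}).Nonempty ∧ (B ∩ {x | ⟪v 2, x⟫ = a 2}).Nonempty := by
  
  intro R B
  have hfin : (P : Set E3).Finite := P.finite_toSet
  have hRfin : R.Finite := hfin.inter_of_left _
  have hBfin : B.Finite := hfin.inter_of_left _
  have key : ∀ u : Bool, ∀ s t : Bool,
      ((P : Set E3) ∩ halfSpace (v 0) (a 0) u ∩ halfSpace (v 1) (a 1) s ∩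
        halfSpace (v 2) (a 2) t) = (P : Set E3) ∩ orthant v a ![u, s, t] := by
    intro u s t
    ext x
    simp only [orthant, Set.mem_inter_iff, Set.mem_iInter]
    constructor
    · rintro ⟨⟨⟨hxP, h0⟩, hA⟩, hB⟩
      refine ⟨hxP, fun i => ?_⟩
      fin_cases i <;> simpa
    · rintro ⟨hxP, h⟩
      exact ⟨⟨⟨hxP, by simpa using h 0⟩, by simpa using h 1⟩, by simpa using h 2⟩
  have hquad : ∀ u s t : Bool,
      ((P : Set E3) ∩ halfSpace (v 0) (a 0) u ∩ halfSpace (v 1) (a 1) s ∩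
        halfSpace (v 2) (a 2) t).ncard ≤ k := by
    intro u s t
    rw [key]
    exact le_of_eq (hoct _)
  refine ⟨fun s => hpair 0 1 (by decide) false s,
          fun s => hpair 0 1 (by decide) true s,
          fun s => hpair 0 2 (by decide) false s,
          fun s => hpair 0 2 (by decide) true s,
          fun s t => hquad false s t,
          fun s t => hquad true s t,
          ?_, ?_, ?_, ?_⟩
  · exact plane_nonempty R hRfin (v 1) (a 1) k hRcard
      (hpair 0 1 (by decide) false false) (hpair 0 1 (by decide) false true)
  · exact plane_nonempty B hBfin (v 1) (a 1) k hBcard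
      (hpair 0 1 (by decide) true false) (hpair 0 1 (by decide) true true)
  · exact plane_nonempty R hRfin (v 2) (a 2) k hRcard
      (hpair 0 2 (by decide) false false) (hpair 0 2 (by decide) false true)
  · exact plane_nonempty B hBfin (v 2) (a 2) k hBcard
      (hpair 0 2 (by decide) true false) (hpair 0 2 (by decide) true true)
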